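/- Let (X_t)_{t∈ℝ^l} be an ℝ^d-valued strictly stationary random field. Suppose that for all j, k ∈ {1,…,d} and every sequence (t_n)_{n∈ℕ} ⊆ ℝ^l with ‖t_n‖_∞ → ∞, lim_{n→∞} E[e^{i(X_{t_n}^{(j)} − X_0^{(k)})}] = E[e^{iX_0^{(j)}}] · E[e^{−iX_0^{(k)}}]. Then for all j, k ∈ {1,…,d} and every sequence (t_n) ⊆ ℝ^l with ‖t_n‖_∞ → ∞, lim_{n→∞} E[e^{i(X_{t_n}^{(j)} + X_0^{(k)})}] = E[e^{iX_0^{(j)}}] · E[e^{iX_0^{(k)}}]. -/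

import Mathlib

open MeasureTheory Filter ProbabilityTheory
open scoped MeasureTheory

noncomputable section

/-- The `n`-fold convolution power of a measure. -/
def convPow {E : Type*} [MeasurableSpace E] [AddMonoid E] (ν : Measure E) : ℕ → Measure E
  | 0 => Measure.dirac 0
  | n + 1 => (convPow ν n) ∗ ν

/-- A probability measure is infinitely divisible if every `n ≥ 1` admits an `n`-th
convolution root. -/
def IsInfDiv {E : Type*} [MeasurableSpace E] [AddMonoid E] (μ : Measure E) : Prop :=
  ∀ n : ℕ, 1 ≤ n → ∃ ν : Measure E, IsProbabilityMeasure ν ∧ convPow ν n = μ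

/-- A random field is strictly stationary: all finite-dimensional distributions are
invariant under a common shift of the indices. -/
def IsStationaryField {Ω : Type*} [MeasurableSpace Ω] {l d : ℕ} (P : Measure Ω)
    (X : (Fin l → ℝ) → Ω → (Fin d → ℝ)) : Prop :=
  ∀ (h : Fin l → ℝ) (m : ℕ) (t : Fin m → (Fin l → ℝ)),
    P.map (fun ω (j : Fin m) => X (t j + h) ω) = P.map (fun ω (j : Fin m) => X (t j) ω)

/-- All finite-dimensional distributions of the field are infinitely divisible. -/
def IsIDField {Ω : Type*} [MeasurableSpace Ω] {l d : ℕ} (P : Measure Ω)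
    (X : (Fin l → ℝ) → Ω → (Fin d → ℝ)) : Prop :=
  ∀ (m : ℕ) (t : Fin m → (Fin l → ℝ)),
    IsInfDiv (P.map (fun ω (j : Fin m) => X (t j) ω))

/-- The random field is mixing (characteristic-function formulation); the norm on
`Fin l → ℝ` is the sup norm. -/
def IsMixingField {Ω : Type*} [MeasurableSpace Ω] {l d : ℕ} (P : Measure Ω)
    (X : (Fin l → ℝ) → Ω → (Fin d → ℝ)) : Prop :=
  ∀ (m : ℕ) (s p : Fin m → (Fin l → ℝ)) (θ₁ θ₂ : Fin m → Fin d → ℝ)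
    (t : ℕ → (Fin l → ℝ)), Tendsto (fun n => ‖t n‖) atTop atTop →
    Tendsto (fun n => ∫ ω, Complex.exp (Complex.I *
        (((∑ j, ∑ k, θ₁ j k * X (s j) ω k) + ∑ j, ∑ k, θ₂ j k * X (p j + t n) ω k : ℝ) : ℂ)) ∂P)
      atTop (nhds
        ((∫ ω, Complex.exp (Complex.I * ((∑ j, ∑ k, θ₁ j k * X (s j) ω k : ℝ) : ℂ)) ∂P) *
         (∫ ω, Complex.exp (Complex.I * ((∑ j, ∑ k, θ₂ j k * X (p j) ω k : ℝ) : ℂ)) ∂P)))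

/-- A subset of `ℝ^l` has density one w.r.t. Lebesgue measure. -/
def HasDensityOne {l : ℕ} (D : Set (Fin l → ℝ)) : Prop :=
  Tendsto (fun T : ℝ => ((2 * T) ^ l)⁻¹ *
      ∫ x in Set.univ.pi (fun _ : Fin l => Set.Ioc (-T) T),
        Set.indicator Dᶜ (fun _ => (1 : ℝ)) x)
    atTop (nhds 0)

/-- The random field is weakly mixing (characteristic-function formulation along a
density-one set). -/
def IsWeaklyMixingField {Ω : Type*} [MeasurableSpace Ω] {l d : ℕ} (P : Measure Ω)
    (X : (Fin l → ℝ) → Ω → (Fin d → ℝ)) : Prop :=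
  ∃ D : Set (Fin l → ℝ), HasDensityOne D ∧
    ∀ (m : ℕ) (s p : Fin m → (Fin l → ℝ)) (θ₁ θ₂ : Fin m → Fin d → ℝ)
      (t : ℕ → (Fin l → ℝ)), (∀ n, t n ∈ D) → Tendsto (fun n => ‖t n‖) atTop atTop →
      Tendsto (fun n => ∫ ω, Complex.exp (Complex.I *
          (((∑ j, ∑ k, θ₁ j k * X (s j) ω k) + ∑ j, ∑ k, θ₂ j k * X (p j + t n) ω k : ℝ) : ℂ)) ∂P)
        atTop (nhds
          ((∫ ω, Complex.exp (Complex.I * ((∑ j, ∑ k, θ₁ j k * X (s j) ω k : ℝ) : ℂ)) ∂P) *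
           (∫ ω, Complex.exp (Complex.I * ((∑ j, ∑ k, θ₂ j k * X (p j) ω k : ℝ) : ℂ)) ∂P)))

/-!
Put `Y_u = e^{i X_u^{(j)}} - 𝔼 e^{i X_0^{(j)}}` in `L²(P)`. By stationarity `⟪Y_u, Y_v⟫` depends
only on `v - u`, and the hypothesis for `k = j` says that it tends to `0` as `‖v - u‖ → ∞`.
A bounded family that is asymptotically orthogonal in this sense converges weakly to `0`: if
`|⟪W, Y_u⟫| ≥ ε` on an unbounded set of `u`, pick `N` points of it pairwise far apart; rotating
each `Y_u` by a phase `c_u`, `N ε ≤ ‖W‖ ‖∑ c_u Y_u‖ ≤ ‖W‖ (N C² + N² δ)^{1/2}`, which fails for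
large `N`. Pairing with `W = e^{-i X_0^{(k)}} - 𝔼 e^{-i X_0^{(k)}}` gives
`⟪W, Y_u⟫ = 𝔼 e^{i(X_u^{(j)} + X_0^{(k)})} - 𝔼 e^{i X_0^{(j)}} 𝔼 e^{i X_0^{(k)}} → 0`.
-/

open Bornology Metric Finset
open scoped InnerProductSpace ComplexConjugate Topology

section AlmostOrthogonal

variable {𝕜 E : Type*} [RCLike 𝕜] [NormedAddCommGroup E] [InnerProductSpace 𝕜 E]

theorem norm_sum_smul_sq_le {ι : Type*} {s : Finset ι} {y : ι → E} {c : ι → 𝕜} {C δ : ℝ}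
    (hc : ∀ i, ‖c i‖ ≤ 1) (hC : ∀ i, ‖y i‖ ≤ C) (hδ : 0 ≤ δ)
    (hy : (s : Set ι).Pairwise fun i j => ‖⟪y i, y j⟫_𝕜‖ ≤ δ) :
    ‖∑ i ∈ s, c i • y i‖ ^ 2 ≤ #s * C ^ 2 + #s ^ 2 * δ := by
  classical
  have hterm : ∀ i ∈ s, ∀ j ∈ s,
      ‖⟪c i • y i, c j • y j⟫_𝕜‖ ≤ (if i = j then C ^ 2 else 0) + δ := by
    intro i hi j hj
    rw [inner_smul_left, inner_smul_right, norm_mul, norm_mul, RCLike.norm_conj, ← mul_assoc]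
    refine (mul_le_of_le_one_left (norm_nonneg ⟪y i, y j⟫_𝕜)
      (mul_le_one₀ (hc i) (norm_nonneg _) (hc j))).trans ?_
    split_ifs with hij
    · subst hij
      have := (norm_inner_le_norm (𝕜 := 𝕜) (y i) (y i)).trans
        (mul_self_le_mul_self (norm_nonneg _) (hC i))
      nlinarith
    · simpa using hy hi hj hij
  calc ‖∑ i ∈ s, c i • y i‖ ^ 2
      ≤ ‖⟪∑ i ∈ s, c i • y i, ∑ i ∈ s, c i • y i⟫_𝕜‖ := by
        rw [← inner_self_eq_norm_sq (𝕜 := 𝕜)]; exact RCLike.re_le_norm _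
    _ = ‖∑ i ∈ s, ∑ j ∈ s, ⟪c i • y i, c j • y j⟫_𝕜‖ := by simp_rw [sum_inner, inner_sum]
    _ ≤ ∑ i ∈ s, ∑ j ∈ s, ‖⟪c i • y i, c j • y j⟫_𝕜‖ :=
        (norm_sum_le _ _).trans (sum_le_sum fun i _ => norm_sum_le _ _)
    _ ≤ ∑ i ∈ s, ∑ j ∈ s, ((if i = j then C ^ 2 else 0) + δ) :=
        sum_le_sum fun i hi => sum_le_sum fun j hj => hterm i hi j hj
    _ = #s * C ^ 2 + #s ^ 2 * δ := by
        simp only [sum_add_distrib, sum_ite_eq, sum_const, nsmul_eq_mul, sum_ite_mem, inter_self,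
          add_right_inj]
        ring

theorem sq_sum_norm_inner_le {ι : Type*} {s : Finset ι} {y : ι → E} {C δ : ℝ}
    (hC : ∀ i, ‖y i‖ ≤ C) (hδ : 0 ≤ δ)
    (hy : (s : Set ι).Pairwise fun i j => ‖⟪y i, y j⟫_𝕜‖ ≤ δ) (w : E) :
    (∑ i ∈ s, ‖⟪w, y i⟫_𝕜‖) ^ 2 ≤ ‖w‖ ^ 2 * (#s * C ^ 2 + #s ^ 2 * δ) := by
  -- `c i` is the phase turning `⟪w, y i⟫` into its norm; the junk value `0 / 0 = 0` also works.
  set c : ι → 𝕜 := fun i => conj ⟪w, y i⟫_𝕜 / ‖⟪w, y i⟫_𝕜‖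
  have hc : ∀ i, ‖c i‖ ≤ 1 := fun i => by
    rw [norm_div, RCLike.norm_conj, RCLike.norm_ofReal, abs_norm]
    exact div_self_le_one _
  have hphase : ∀ z : 𝕜, conj z / ‖z‖ * z = ‖z‖ := fun z => by
    rcases eq_or_ne z 0 with rfl | hz
    · simp
    · rw [div_mul_eq_mul_div, RCLike.conj_mul, sq, mul_div_assoc,
        div_self (RCLike.ofReal_ne_zero.2 (norm_ne_zero_iff.2 hz)), mul_one]
  have hsum : ((∑ i ∈ s, ‖⟪w, y i⟫_𝕜‖ : ℝ) : 𝕜) = ⟪w, ∑ i ∈ s, c i • y i⟫_𝕜 := by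
    simp_rw [inner_sum, inner_smul_right, c, hphase]
    push_cast; rfl
  calc (∑ i ∈ s, ‖⟪w, y i⟫_𝕜‖) ^ 2 = ‖⟪w, ∑ i ∈ s, c i • y i⟫_𝕜‖ ^ 2 := by
        rw [← hsum, RCLike.norm_ofReal, abs_of_nonneg (sum_nonneg fun _ _ => norm_nonneg _)]
    _ ≤ (‖w‖ * ‖∑ i ∈ s, c i • y i‖) ^ 2 :=
        pow_le_pow_left₀ (norm_nonneg _) (norm_inner_le_norm _ _) 2
    _ ≤ ‖w‖ ^ 2 * (#s * C ^ 2 + #s ^ 2 * δ) := by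
        rw [mul_pow]
        exact mul_le_mul_of_nonneg_left (norm_sum_smul_sq_le hc hC hδ hy) (sq_nonneg _)

end AlmostOrthogonal

theorem exists_finset_card_eq_pairwise_le_dist {α : Type*} [PseudoMetricSpace α] {A : Set α}
    (hA : ¬IsBounded A) (R : ℝ) (N : ℕ) :
    ∃ t : Finset α, #t = N ∧ ↑t ⊆ A ∧ (t : Set α).Pairwise fun x y => R ≤ dist x y := by
  classical
  induction N with
  | zero => exact ⟨∅, by simp⟩
  | succ N ih =>
    obtain ⟨t, hcard, htA, hsep⟩ := ih
    have hbdd : IsBounded ((t : Set α) ∪ ⋃ x ∈ t, ball x R) :=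
      t.finite_toSet.isBounded.union ((isBounded_biUnion_finset t).2 fun _ _ => isBounded_ball)
    obtain ⟨a, haA, hat⟩ : (A \ ((t : Set α) ∪ ⋃ x ∈ t, ball x R)).Nonempty :=
      Set.sdiff_nonempty.2 fun h => hA (hbdd.subset h)
    simp only [Set.mem_union, Finset.mem_coe, Set.mem_iUnion, mem_ball, not_or, not_exists,
      not_lt] at hat
    refine ⟨insert a t, by rw [card_insert_of_notMem hat.1, hcard], ?_, ?_⟩
    · rw [coe_insert]; exact Set.insert_subset haA htA
    · rw [coe_insert]
      exact hsep.insert fun b hb _ => ⟨hat.2 b hb, dist_comm a b ▸ hat.2 b hb⟩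

theorem tendsto_inner_cobounded_of_tendsto_inner_dist {𝕜 E α : Type*} [RCLike 𝕜]
    [NormedAddCommGroup E] [InnerProductSpace 𝕜 E] [PseudoMetricSpace α]
    {y : α → E} {C : ℝ} (hC : ∀ a, ‖y a‖ ≤ C)
    (hy : Tendsto (fun p : α × α => ⟪y p.1, y p.2⟫_𝕜) (comap (fun p => dist p.1 p.2) atTop)
      (𝓝 0))
    (w : E) : Tendsto (fun a => ⟪w, y a⟫_𝕜) (cobounded α) (𝓝 0) := by
  refine Metric.tendsto_nhds.2 fun ε hε => ?_
  by_contra hfar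
  have hA : ¬IsBounded {a | ε ≤ ‖⟪w, y a⟫_𝕜‖} := fun hb =>
    hfar <| mem_of_superset (isBounded_def.1 hb) fun a ha => by simpa using ha
  -- `(N ε)² ≤ ‖w‖² (N C² + N² δ)` with `‖w‖² δ ≤ ε² / 2` forces `N ε² ≤ 2 ‖w‖² C²`.
  set δ := ε ^ 2 / (2 * (‖w‖ ^ 2 + 1))
  have hδ : 0 < δ := by positivity
  have hwδ : ‖w‖ ^ 2 * δ ≤ ε ^ 2 / 2 := by
    rw [mul_div_assoc', div_le_div_iff₀ (by positivity) (by positivity)]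
    nlinarith [sq_nonneg ‖w‖, sq_nonneg ε]
  obtain ⟨R, hR⟩ := eventually_atTop.1 <| eventually_comap.1 <|
    (tendsto_zero_iff_norm_tendsto_zero.1 hy).eventually (ge_mem_nhds hδ)
  obtain ⟨N, hN⟩ := exists_nat_gt (2 * ‖w‖ ^ 2 * C ^ 2 / ε ^ 2)
  obtain ⟨t, hcard, htA, hsep⟩ := exists_finset_card_eq_pairwise_le_dist hA R N
  have hlow : N * ε ≤ ∑ a ∈ t, ‖⟪w, y a⟫_𝕜‖ := by
    simpa [hcard] using card_nsmul_le_sum t _ ε fun a ha => htA ha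
  have hup := sq_sum_norm_inner_le hC hδ.le (hsep.imp fun a b hab => hR _ hab (a, b) rfl) w
  rw [hcard] at hup
  have hNpos : (0 : ℝ) < N := lt_of_le_of_lt (by positivity) hN
  have : N * ε ^ 2 ≤ 2 * ‖w‖ ^ 2 * C ^ 2 := by
    have := (pow_le_pow_left₀ (by positivity) hlow 2).trans hup
    nlinarith
  rw [div_lt_iff₀ (by positivity)] at hN
  linarith

section Cobounded

variable {E : Type*} [SeminormedAddCommGroup E]

theorem tendsto_cobounded_iff_seq_tendsto {β : Type*} {f : E → β} {l : Filter β} :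
    Tendsto f (cobounded E) l ↔
      ∀ t : ℕ → E, Tendsto (fun n => ‖t n‖) atTop atTop → Tendsto (fun n => f (t n)) atTop l := by
  rw [← comap_norm_atTop, tendsto_iff_seq_tendsto]
  simp only [tendsto_comap_iff, Function.comp_def]

theorem tendsto_sub_comap_dist_cobounded :
    Tendsto (fun p : E × E => p.2 - p.1) (comap (fun p => dist p.1 p.2) atTop) (cobounded E) := by
  refine tendsto_norm_atTop_iff_cobounded.1 (tendsto_comap.congr fun p => ?_)
  rw [dist_comm, dist_eq_norm]

end Cobounded

section Centered

variable {Ω 𝕜 : Type*} [MeasurableSpace Ω] [RCLike 𝕜] (P : Measure Ω) [IsProbabilityMeasure P]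

theorem integral_sub_integral_mul_sub_integral {f g : Ω → 𝕜} (hf : Integrable f P)
    (hg : Integrable g P) (hfg : Integrable (fun ω => f ω * g ω) P) :
    ∫ ω, (f ω - ∫ ω', f ω' ∂P) * (g ω - ∫ ω', g ω' ∂P) ∂P
      = ∫ ω, f ω * g ω ∂P - (∫ ω, f ω ∂P) * ∫ ω, g ω ∂P := by
  set a := ∫ ω, f ω ∂P
  set b := ∫ ω, g ω ∂P
  have hexpand : ∀ ω, (f ω - a) * (g ω - b) = (f ω * g ω - a * g ω) - (b * f ω - a * b) :=
    fun ω => by ring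
  simp_rw [hexpand]
  rw [integral_sub (by exact hfg.sub (hg.const_mul a))
      (by exact (hf.const_mul b).sub (integrable_const _)),
    integral_sub hfg (hg.const_mul a), integral_sub (hf.const_mul b) (integrable_const _),
    integral_const_mul, integral_const_mul, integral_const]
  simp only [probReal_univ, one_smul]
  ring

def MeasureTheory.MemLp.centeredToLp {f : Ω → 𝕜} (hf : MemLp f 2 P) : Lp 𝕜 2 P :=
  (hf.sub (memLp_const (∫ ω, f ω ∂P))).toLp _

theorem inner_centeredToLp {f g : Ω → 𝕜} (hf : MemLp f 2 P) (hg : MemLp g 2 P) :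
    ⟪hf.centeredToLp P, hg.centeredToLp P⟫_𝕜
      = ∫ ω, conj (f ω) * g ω ∂P - conj (∫ ω, f ω ∂P) * ∫ ω, g ω ∂P := by
  have hf' : MemLp (fun ω => conj (f ω)) 2 P := hf.star
  rw [L2.inner_def, ← integral_conj,
    ← integral_sub_integral_mul_sub_integral P (hf'.integrable one_le_two)
      (hg.integrable one_le_two) (hf'.integrable_mul hg)]
  refine integral_congr_ae ?_
  filter_upwards [(hf.sub (memLp_const _)).coeFn_toLp, (hg.sub (memLp_const _)).coeFn_toLp]
    with ω hfω hgω
  rw [MemLp.centeredToLp, MemLp.centeredToLp, RCLike.inner_apply', hfω, hgω, integral_conj]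
  simp

theorem norm_centeredToLp_le {f : Ω → 𝕜} (hf : MemLp f 2 P) {C : ℝ} (hC : ∀ ω, ‖f ω‖ ≤ C) :
    ‖hf.centeredToLp P‖ ≤ 2 * C := by
  have hmean : ‖∫ ω, f ω ∂P‖ ≤ C := by
    simpa using norm_integral_le_of_norm_le_const (μ := P) (Eventually.of_forall hC)
  have hbound : ∀ᵐ ω ∂P, ‖hf.centeredToLp P ω‖ ≤ 2 * C := by
    filter_upwards [(hf.sub (memLp_const _)).coeFn_toLp] with ω hω
    rw [MemLp.centeredToLp, hω, two_mul]
    exact (norm_sub_le _ _).trans (add_le_add (hC ω) hmean)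
  simpa [measureUnivNNReal] using
    Lp.norm_le_of_ae_bound (by linarith [(norm_nonneg _).trans hmean]) hbound

end Centered

section ExpI

open Complex

variable {Ω : Type*} [MeasurableSpace Ω] {P : Measure Ω}

theorem conj_exp_I_mul_ofReal_mul_exp_I_mul_ofReal (x y : ℝ) :
    conj (exp (I * x)) * exp (I * y) = exp (I * ↑(y - x)) := by
  rw [← exp_conj, ← exp_add]
  congr 1
  simp only [map_mul, conj_I, conj_ofReal, ofReal_sub]
  ring

theorem exp_I_mul_ofReal_mul_exp_I_mul_ofReal (x y : ℝ) :
    exp (I * x) * exp (I * y) = exp (I * ↑(y + x)) := by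
  rw [← exp_add]
  push_cast
  ring_nf

theorem integral_exp_neg_I_mul_ofReal (r : Ω → ℝ) :
    ∫ ω, exp (-I * r ω) ∂P = conj (∫ ω, exp (I * r ω) ∂P) := by
  rw [← integral_conj]
  simp [← exp_conj]

theorem memLp_exp_I_mul_ofReal [IsFiniteMeasure P] {r : Ω → ℝ} (hr : Measurable r)
    (p : ENNReal) : MemLp (fun ω => exp (I * r ω)) p P :=
  MemLp.of_bound (by fun_prop) 1 (Eventually.of_forall fun ω => by
    rw [mul_comm, norm_exp_ofReal_mul_I])

end ExpI

namespace IsStationaryField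

open Complex

variable {Ω : Type*} [MeasurableSpace Ω] {l d : ℕ} {P : Measure Ω}
  {X : (Fin l → ℝ) → Ω → (Fin d → ℝ)}

theorem identDistrib_pair (hstat : IsStationaryField P X) (hmeas : ∀ t, Measurable (X t))
    (u v h : Fin l → ℝ) :
    IdentDistrib (fun ω => (X (u + h) ω, X (v + h) ω)) (fun ω => (X u ω, X v ω)) P P := by
  have hfin : IdentDistrib (fun ω (i : Fin 2) => X (![u, v] i + h) ω)
      (fun ω i => X (![u, v] i) ω) P P :=
    ⟨(measurable_pi_lambda _ fun _ => hmeas _).aemeasurable,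
      (measurable_pi_lambda _ fun _ => hmeas _).aemeasurable, hstat h 2 ![u, v]⟩
  exact hfin.comp (u := fun x => (x 0, x 1)) (by fun_prop)

theorem integral_exp_I_mul (hstat : IsStationaryField P X) (hmeas : ∀ t, Measurable (X t))
    (u : Fin l → ℝ) (a : Fin d) :
    ∫ ω, exp (I * X u ω a) ∂P = ∫ ω, exp (I * X 0 ω a) ∂P := by
  simpa using ((hstat.identDistrib_pair hmeas 0 0 u).comp
    (u := fun p => exp (I * p.1 a)) (by fun_prop)).integral_eq

theorem integral_conj_exp_I_mul_mul (hstat : IsStationaryField P X)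
    (hmeas : ∀ t, Measurable (X t)) (u v : Fin l → ℝ) (a : Fin d) :
    ∫ ω, conj (exp (I * X u ω a)) * exp (I * X v ω a) ∂P
      = ∫ ω, exp (I * ↑(X (v - u) ω a - X 0 ω a)) ∂P := by
  simp_rw [conj_exp_I_mul_ofReal_mul_exp_I_mul_ofReal]
  simpa using ((hstat.identDistrib_pair hmeas 0 (v - u) u).comp
    (u := fun p => exp (I * ↑(p.2 a - p.1 a))) (by fun_prop)).integral_eq

variable [IsProbabilityMeasure P]

theorem inner_centeredToLp_exp (hstat : IsStationaryField P X) (hmeas : ∀ t, Measurable (X t))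
    {u v : Fin l → ℝ} {a : Fin d} (hu : MemLp (fun ω => exp (I * X u ω a)) 2 P)
    (hv : MemLp (fun ω => exp (I * X v ω a)) 2 P) :
    ⟪hu.centeredToLp P, hv.centeredToLp P⟫_ℂ
      = ∫ ω, exp (I * ↑(X (v - u) ω a - X 0 ω a)) ∂P
        - conj (∫ ω, exp (I * X 0 ω a) ∂P) * ∫ ω, exp (I * X 0 ω a) ∂P := by
  rw [inner_centeredToLp, hstat.integral_conj_exp_I_mul_mul hmeas,
    hstat.integral_exp_I_mul hmeas u, hstat.integral_exp_I_mul hmeas v]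

theorem inner_star_centeredToLp_exp (hstat : IsStationaryField P X)
    (hmeas : ∀ t, Measurable (X t)) {u : Fin l → ℝ} {a b : Fin d}
    (h₀ : MemLp (fun ω => exp (I * X 0 ω b)) 2 P) (hu : MemLp (fun ω => exp (I * X u ω a)) 2 P) :
    ⟪h₀.star.centeredToLp P, hu.centeredToLp P⟫_ℂ
      = ∫ ω, exp (I * ↑(X u ω a + X 0 ω b)) ∂P
        - (∫ ω, exp (I * X 0 ω a) ∂P) * ∫ ω, exp (I * X 0 ω b) ∂P := by
  rw [inner_centeredToLp, hstat.integral_exp_I_mul hmeas u]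
  simp only [Pi.star_apply, RCLike.star_def, RingHomCompTriple.comp_apply, RingHom.id_apply,
    exp_I_mul_ofReal_mul_exp_I_mul_ofReal, ofReal_add, integral_conj, sub_right_inj]
  exact mul_comm _ _

end IsStationaryField

/-- For a strictly stationary `ℝ^d`-valued random field, if
`E[e^{i(X_{t_n}^{(j)} - X_0^{(k)})}] → E[e^{iX_0^{(j)}}] E[e^{-iX_0^{(k)}}]` for all
`j, k` and all sequences with `‖t_n‖_∞ → ∞`, then also
`E[e^{i(X_{t_n}^{(j)} + X_0^{(k)})}] → E[e^{iX_0^{(j)}}] E[e^{iX_0^{(k)}}]` for all such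
`j, k` and sequences. -/
theorem stmt_10 {Ω : Type*} [MeasurableSpace Ω] {l d : ℕ} (P : Measure Ω)
    [IsProbabilityMeasure P] (X : (Fin l → ℝ) → Ω → (Fin d → ℝ))
    (hmeas : ∀ t, Measurable (X t))
    (hstat : IsStationaryField P X)
    (hminus : ∀ (j k : Fin d) (t : ℕ → (Fin l → ℝ)),
      Tendsto (fun n => ‖t n‖) atTop atTop →
      Tendsto (fun n =>
          ∫ ω, Complex.exp (Complex.I * ((X (t n) ω j - X 0 ω k : ℝ) : ℂ)) ∂P)
        atTop (nhds ((∫ ω, Complex.exp (Complex.I * ((X 0 ω j : ℝ) : ℂ)) ∂P) *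
          (∫ ω, Complex.exp (-Complex.I * ((X 0 ω k : ℝ) : ℂ)) ∂P)))) :
    ∀ (j k : Fin d) (t : ℕ → (Fin l → ℝ)),
      Tendsto (fun n => ‖t n‖) atTop atTop →
      Tendsto (fun n =>
          ∫ ω, Complex.exp (Complex.I * ((X (t n) ω j + X 0 ω k : ℝ) : ℂ)) ∂P)
        atTop (nhds ((∫ ω, Complex.exp (Complex.I * ((X 0 ω j : ℝ) : ℂ)) ∂P) *
          (∫ ω, Complex.exp (Complex.I * ((X 0 ω k : ℝ) : ℂ)) ∂P))) := by
  intro j k t ht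
  have hLp : ∀ u a, MemLp (fun ω => Complex.exp (Complex.I * X u ω a)) 2 P := fun u a =>
    memLp_exp_I_mul_ofReal ((measurable_pi_apply a).comp (hmeas u)) 2
  set φ := ∫ ω, Complex.exp (Complex.I * X 0 ω j) ∂P
  have hcorr : Tendsto
      (fun w => ∫ ω, Complex.exp (Complex.I * ↑(X w ω j - X 0 ω j)) ∂P - conj φ * φ)
      (cobounded _) (𝓝 0) := by
    have h : Tendsto (fun w => ∫ ω, Complex.exp (Complex.I * ↑(X w ω j - X 0 ω j)) ∂P)
        (cobounded _)
        (𝓝 (φ * conj φ)) := tendsto_cobounded_iff_seq_tendsto.2 fun t ht => by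
      simpa only [integral_exp_neg_I_mul_ofReal] using hminus j j t ht
    simpa only [mul_comm φ, sub_self] using h.sub_const (conj φ * φ)
  have hweak := tendsto_inner_cobounded_of_tendsto_inner_dist
    (fun u => norm_centeredToLp_le P (hLp u j) fun ω => (Complex.norm_exp_I_mul_ofReal _).le)
    ((hcorr.comp tendsto_sub_comap_dist_cobounded).congr fun p =>
      (hstat.inner_centeredToLp_exp hmeas (hLp p.1 j) (hLp p.2 j)).symm)
    ((hLp 0 k).star.centeredToLp P)
  exact tendsto_sub_nhds_zero_iff.1 <| (hweak.comp (tendsto_norm_atTop_iff_cobounded.1 ht)).congr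
    fun n => hstat.inner_star_centeredToLp_exp hmeas (hLp 0 k) (hLp (t n) j)

end
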